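/- arXiv:1303.5978 — 5 statements merged into one kernel-verified Lean document; each statement's English description precedes it below -/
import Mathlib

section
/- Let (η_k)_{k≥1} be independent real random variables with sup_{λ>0} λ^α P(|η_k| > λ) ≤ K for all k, where α ∈ (0,1) and K > 0. Then for any sequence (a_k) of real numbers with ∑_k |a_k|^α < ∞, sup_{λ>0} λ^α P(|∑_k a_k η_k| > λ) ≤ r_α K ∑_k |a_k|^α, where r_α = 1 + 1/(1-α). -/
/-!
Split the event `{λ < |S|}` according to whether some term `a_k η_k` exceeds `λ` in absolute
value. The union bound controls the first part by `K λ^(-α) ∑ |a_k|^α`. Off that event, `S` is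
also the sum of the terms cut off at level `λ`, and by the layer-cake formula the cut-off term has
first moment at most `∫₀^λ K |a_k|^α t^(-α) dt = K |a_k|^α λ^(1-α) / (1-α)`, finite because
`α < 1`; Markov's inequality applied to the sum of their absolute values gives the second part.
-/

open MeasureTheory ProbabilityTheory Set
open scoped ENNReal

noncomputable def cutoff (l x : ℝ) : ℝ := if |x| ≤ l then x else 0

lemma cutoff_of_abs_le {l x : ℝ} (h : |x| ≤ l) : cutoff l x = x := if_pos h

lemma abs_cutoff_le_abs (l x : ℝ) : |cutoff l x| ≤ |x| := by
  unfold cutoff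
  split_ifs <;> simp

lemma abs_cutoff_le {l : ℝ} (hl : 0 ≤ l) (x : ℝ) : |cutoff l x| ≤ l := by
  unfold cutoff
  split_ifs with h
  · exact h
  · simpa using hl

lemma measurable_cutoff (l : ℝ) : Measurable (cutoff l) :=
  Measurable.ite (measurableSet_le measurable_abs measurable_const) measurable_id measurable_const

lemma exists_lt_abs_or_le_tsum_enorm_cutoff {ι : Type*} {f : ι → ℝ} {s l : ℝ} (hf : HasSum f s)
    (hs : l < |s|) : (∃ k, l < |f k|) ∨ ENNReal.ofReal l ≤ ∑' k, ‖cutoff l (f k)‖ₑ := by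
  refine or_iff_not_imp_left.2 fun h => ?_
  push Not at h
  have hcut : HasSum (fun k => cutoff l (f k)) s := by
    simpa only [cutoff_of_abs_le (h _)] using hf
  calc ENNReal.ofReal l ≤ ‖s‖ₑ := by
        rw [Real.enorm_eq_ofReal_abs]
        exact ENNReal.ofReal_le_ofReal hs.le
    _ ≤ ∑' k, ‖cutoff l (f k)‖ₑ := hcut.enorm_le_of_bounded ENNReal.summable.hasSum fun _ => le_rfl

lemma tsum_ofReal_mul_const {ι : Type*} {c : ι → ℝ} (hc : ∀ k, 0 ≤ c k) (hcs : Summable c)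
    {r : ℝ} (hr : 0 ≤ r) : ∑' k, ENNReal.ofReal (c k * r) = ENNReal.ofReal ((∑' k, c k) * r) := by
  rw [← ENNReal.ofReal_tsum_of_nonneg (fun k => mul_nonneg (hc k) hr) (hcs.mul_right r),
    tsum_mul_right]

lemma setLIntegral_Ioc_ofReal_mul_rpow_neg {c α l : ℝ} (hc : 0 ≤ c) (hα : α < 1) (hl : 0 ≤ l) :
    ∫⁻ t in Ioc 0 l, ENNReal.ofReal (c * t ^ (-α)) =
      ENNReal.ofReal (c * (l ^ (1 - α) / (1 - α))) := by
  have hint : IntegrableOn (fun t : ℝ => c * t ^ (-α)) (Ioc 0 l) := by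
    have h := intervalIntegral.intervalIntegrable_rpow' (a := 0) (b := l) (r := -α) (by linarith)
    rw [intervalIntegrable_iff_integrableOn_Ioc_of_le hl] at h
    exact h.const_mul c
  have hnonneg : 0 ≤ᵐ[volume.restrict (Ioc 0 l)] fun t : ℝ => c * t ^ (-α) := by
    filter_upwards [ae_restrict_mem measurableSet_Ioc] with t ht
    exact mul_nonneg hc (Real.rpow_nonneg ht.1.le _)
  rw [← ofReal_integral_eq_lintegral_ofReal hint hnonneg, ← intervalIntegral.integral_of_le hl,
    intervalIntegral.integral_const_mul, integral_rpow (Or.inl (by linarith)),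
    Real.zero_rpow (by linarith), sub_zero, neg_add_eq_sub]

section

variable {Ω : Type*} [MeasurableSpace Ω] {μ : Measure Ω}

lemma lintegral_enorm_cutoff_le {Y : Ω → ℝ} (hY : Measurable Y) {l : ℝ} (hl : 0 ≤ l) :
    ∫⁻ ω, ‖cutoff l (Y ω)‖ₑ ∂μ ≤ ∫⁻ t in Ioc 0 l, μ {ω | t < |Y ω|} := by
  have hT : Measurable fun ω => |cutoff l (Y ω)| := ((measurable_cutoff l).comp hY).abs
  simp_rw [Real.enorm_eq_ofReal_abs]
  rw [lintegral_eq_lintegral_meas_lt μ (ae_of_all _ fun ω => abs_nonneg _) hT.aemeasurable]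
  calc ∫⁻ t in Ioi 0, μ {ω | t < |cutoff l (Y ω)|}
      ≤ ∫⁻ t in Ioi 0, (Ioc 0 l).indicator (fun t => μ {ω | t < |Y ω|}) t := by
        refine setLIntegral_mono' measurableSet_Ioi fun t ht => ?_
        by_cases htl : t ≤ l
        · rw [indicator_of_mem (show t ∈ Ioc 0 l from ⟨ht, htl⟩)]
          exact measure_mono fun ω hω => lt_of_lt_of_le hω (abs_cutoff_le_abs l _)
        · have hempty : {ω | t < |cutoff l (Y ω)|} = ∅ :=
            eq_empty_of_forall_notMem fun ω hω => htl (hω.trans_le (abs_cutoff_le hl _)).le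
          rw [hempty, measure_empty]
          exact bot_le
    _ ≤ ∫⁻ t, (Ioc 0 l).indicator (fun t => μ {ω | t < |Y ω|}) t := setLIntegral_le_lintegral _ _
    _ = ∫⁻ t in Ioc 0 l, μ {ω | t < |Y ω|} := lintegral_indicator measurableSet_Ioc _

lemma measure_lt_abs_le_of_rpow_mul_le [IsFiniteMeasure μ] {X : Ω → ℝ} {K α : ℝ}
    (hX : ∀ l : ℝ, 0 < l → l ^ α * (μ {ω | l < |X ω|}).toReal ≤ K) {t : ℝ} (ht : 0 < t) :
    μ {ω | t < |X ω|} ≤ ENNReal.ofReal (K * t ^ (-α)) := by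
  rw [← ENNReal.ofReal_toReal (measure_ne_top μ _)]
  refine ENNReal.ofReal_le_ofReal ?_
  rw [Real.rpow_neg ht.le, ← div_eq_mul_inv, le_div_iff₀' (Real.rpow_pos_of_pos ht α)]
  exact hX t ht

lemma measure_lt_abs_const_mul_le [IsFiniteMeasure μ] {X : Ω → ℝ} {K α : ℝ}
    (hX : ∀ l : ℝ, 0 < l → l ^ α * (μ {ω | l < |X ω|}).toReal ≤ K) (b : ℝ) {t : ℝ} (ht : 0 < t) :
    μ {ω | t < |b * X ω|} ≤ ENNReal.ofReal (K * |b| ^ α * t ^ (-α)) := by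
  rcases eq_or_ne b 0 with rfl | hb
  · simp [ht.not_gt]
  have hb' : 0 < |b| := abs_pos.2 hb
  have hset : {ω | t < |b * X ω|} = {ω | t / |b| < |X ω|} := by
    ext ω
    simp only [mem_ofPred_eq, abs_mul, div_lt_iff₀ hb', mul_comm]
  calc μ {ω | t < |b * X ω|} ≤ ENNReal.ofReal (K * (t / |b|) ^ (-α)) :=
        hset ▸ measure_lt_abs_le_of_rpow_mul_le hX (div_pos ht hb')
    _ = ENNReal.ofReal (K * |b| ^ α * t ^ (-α)) := by
        rw [Real.div_rpow ht.le hb'.le, Real.rpow_neg hb'.le, div_inv_eq_mul, mul_comm _ (|b| ^ α),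
          mul_assoc]

theorem measure_lt_abs_le_of_hasSum {ι : Type*} [Countable ι] {Y : ι → Ω → ℝ}
    (hY : ∀ k, Measurable (Y k)) {c : ι → ℝ} (hc : ∀ k, 0 ≤ c k) (hcs : Summable c) {α : ℝ}
    (hα : α < 1) (htail : ∀ k t, 0 < t → μ {ω | t < |Y k ω|} ≤ ENNReal.ofReal (c k * t ^ (-α)))
    {S : Ω → ℝ} (hS : ∀ᵐ ω ∂μ, HasSum (fun k => Y k ω) (S ω)) {l : ℝ} (hl : 0 < l) :
    μ {ω | l < |S ω|} ≤ ENNReal.ofReal ((1 + 1 / (1 - α)) * (∑' k, c k) * l ^ (-α)) := by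
  set C := ∑' k, c k
  set G : Ω → ℝ≥0∞ := fun ω => ∑' k, ‖cutoff l (Y k ω)‖ₑ
  have hC : 0 ≤ C := tsum_nonneg hc
  have h1α : 0 < 1 - α := sub_pos.2 hα
  have hmoment : 0 ≤ l ^ (1 - α) / (1 - α) := div_nonneg (Real.rpow_nonneg hl.le _) h1α.le
  have hcut : ∀ k, Measurable fun ω => cutoff l (Y k ω) := fun k => (measurable_cutoff l).comp (hY k)
  have hlarge : μ (⋃ k, {ω | l < |Y k ω|}) ≤ ENNReal.ofReal (C * l ^ (-α)) := calc
    _ ≤ ∑' k, μ {ω | l < |Y k ω|} := measure_iUnion_le _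
    _ ≤ ∑' k, ENNReal.ofReal (c k * l ^ (-α)) := ENNReal.tsum_le_tsum fun k => htail k l hl
    _ = _ := tsum_ofReal_mul_const hc hcs (Real.rpow_nonneg hl.le _)
  have hG : ∫⁻ ω, G ω ∂μ ≤ ENNReal.ofReal (C * (l ^ (1 - α) / (1 - α))) := calc
    _ = ∑' k, ∫⁻ ω, ‖cutoff l (Y k ω)‖ₑ ∂μ :=
        lintegral_tsum fun k => (hcut k).enorm.aemeasurable
    _ ≤ ∑' k, ∫⁻ t in Ioc 0 l, ENNReal.ofReal (c k * t ^ (-α)) :=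
        ENNReal.tsum_le_tsum fun k => (lintegral_enorm_cutoff_le (hY k) hl.le).trans
          (setLIntegral_mono' measurableSet_Ioc fun t ht => htail k t ht.1)
    _ = ∑' k, ENNReal.ofReal (c k * (l ^ (1 - α) / (1 - α))) := by
        simp_rw [setLIntegral_Ioc_ofReal_mul_rpow_neg (hc _) hα hl.le]
    _ = _ := tsum_ofReal_mul_const hc hcs hmoment
  have hsmall : μ {ω | ENNReal.ofReal l ≤ G ω} ≤
      ENNReal.ofReal (C * (l ^ (1 - α) / (1 - α)) / l) := by
    refine (meas_ge_le_lintegral_div (Measurable.tsum fun k => (hcut k).enorm).aemeasurable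
      (by simpa using hl) ENNReal.ofReal_ne_top).trans ?_
    rw [ENNReal.ofReal_div_of_pos hl]
    gcongr
  have hsplit : ({ω | l < |S ω|} : Set Ω) ≤ᵐ[μ]
      ((⋃ k, {ω | l < |Y k ω|}) ∪ {ω | ENNReal.ofReal l ≤ G ω} : Set Ω) := by
    filter_upwards [hS] with ω hω hlt
    exact (exists_lt_abs_or_le_tsum_enorm_cutoff hω hlt).imp (fun ⟨k, hk⟩ => mem_iUnion.2 ⟨k, hk⟩) id
  have hpow : l ^ (1 - α) = l ^ (-α) * l := by
    rw [← Real.rpow_add_one hl.ne']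
    ring_nf
  calc μ {ω | l < |S ω|}
      ≤ μ ((⋃ k, {ω | l < |Y k ω|}) ∪ {ω | ENNReal.ofReal l ≤ G ω}) := measure_mono_ae hsplit
    _ ≤ μ (⋃ k, {ω | l < |Y k ω|}) + μ {ω | ENNReal.ofReal l ≤ G ω} := measure_union_le _ _
    _ ≤ ENNReal.ofReal (C * l ^ (-α)) + ENNReal.ofReal (C * (l ^ (1 - α) / (1 - α)) / l) :=
        add_le_add hlarge hsmall
    _ = ENNReal.ofReal ((1 + 1 / (1 - α)) * C * l ^ (-α)) := by
        rw [← ENNReal.ofReal_add (mul_nonneg hC (Real.rpow_nonneg hl.le _))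
          (div_nonneg (mul_nonneg hC hmoment) hl.le), hpow]
        field_simp

end

theorem stmt3_general {Ω : Type*} [MeasurableSpace Ω] (μ : Measure Ω) [IsProbabilityMeasure μ]
    (η : ℕ → Ω → ℝ) (hmeas : ∀ k, Measurable (η k))
    (K α : ℝ) (hK : 0 < K) (hα : α ∈ Set.Ioo (0 : ℝ) 1)
    (htail : ∀ k, ∀ l : ℝ, 0 < l → l ^ α * (μ {ω | l < |η k ω|}).toReal ≤ K)
    (a : ℕ → ℝ) (hsum : Summable (fun k => |a k| ^ α))
    (S : Ω → ℝ) (hS : ∀ᵐ ω ∂μ, HasSum (fun k => a k * η k ω) (S ω)) :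
    ∀ l : ℝ, 0 < l →
      l ^ α * (μ {ω | l < |S ω|}).toReal ≤ (1 + 1 / (1 - α)) * K * ∑' k, |a k| ^ α := by
  intro l hl
  have h1α : 0 < 1 - α := sub_pos.2 hα.2
  have hbound := measure_lt_abs_le_of_hasSum (fun k => (hmeas k).const_mul (a k))
    (fun k => mul_nonneg hK.le (Real.rpow_nonneg (abs_nonneg (a k)) α)) (hsum.mul_left K) hα.2
    (fun k _ ht => measure_lt_abs_const_mul_le (htail k) (a k) ht) hS hl
  rw [tsum_mul_left] at hbound
  calc l ^ α * (μ {ω | l < |S ω|}).toReal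
      ≤ l ^ α * ((1 + 1 / (1 - α)) * (K * ∑' k, |a k| ^ α) * l ^ (-α)) := by
        gcongr
        exact ENNReal.toReal_le_of_le_ofReal (by positivity) hbound
    _ = (1 + 1 / (1 - α)) * K * ∑' k, |a k| ^ α := by
        rw [Real.rpow_neg hl.le]
        field_simp

theorem stmt3 {Ω : Type*} [MeasurableSpace Ω] (μ : Measure Ω) [IsProbabilityMeasure μ]
    (η : ℕ → Ω → ℝ) (hmeas : ∀ k, Measurable (η k))
    (hindep : iIndepFun η μ)
    (K α : ℝ) (hK : 0 < K) (hα : α ∈ Set.Ioo (0 : ℝ) 1)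
    (htail : ∀ k, ∀ l : ℝ, 0 < l → l ^ α * (μ {ω | l < |η k ω|}).toReal ≤ K)
    (a : ℕ → ℝ) (hsum : Summable (fun k => |a k| ^ α))
    (S : Ω → ℝ) (hS : ∀ᵐ ω ∂μ, HasSum (fun k => a k * η k ω) (S ω)) :
    ∀ l : ℝ, 0 < l →
      l ^ α * (μ {ω | l < |S ω|}).toReal ≤ (1 + 1 / (1 - α)) * K * ∑' k, |a k| ^ α :=
  stmt3_general μ η hmeas K α hK hα htail a hsum S hS
end

section
/- Let (η_k)_{k≥1} be independent, mean-zero real random variables with sup_{λ>0} λ^α P(|η_k| > λ) ≤ K for all k, where α ∈ (1,2) and K > 0. Then for any real sequence (a_k) with ∑_k |a_k|^α < ∞, sup_{λ>0} λ^α P(|∑_k a_k η_k| > λ) ≤ r_α K ∑_k |a_k|^α, where r_α is a constant depending only on α (one may take r_α = 1 + 8/(2-α) + 2α/(α-1)). -/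
open MeasureTheory ProbabilityTheory

/-
Fix `l > 0` and write `C k` for the weak-`L^α` constant of the `k`-th summand; only
`l ^ α > r_α ∑ C k` needs an argument. Off the event `⋃ k, {l < |X k|}`, whose probability is at
most `l ^ (-α) ∑ C k`, the series is the series of the truncations `truncAt l (X k)`. The
layer-cake formula bounds their second moments by `2 C k l ^ (2 - α) / (2 - α)` and, because `X k`
is centred, their means by `α C k l ^ (1 - α) / (α - 1)`. For such large `l` the means of the
partial sums are therefore below `l / 2`, and Chebyshev's inequality bounds the probability that a
partial sum exceeds `l` by `8 l ^ (-α) ∑ C k / (2 - α)`, uniformly in the number of terms.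
-/

open Filter Set
open scoped ENNReal

/-- Unlike `ProbabilityTheory.truncation`, which keeps `Ioc (-l) l`, this keeps the closed interval,
so that `truncAt l x = x` exactly off the tail event `l < |x|`. -/
noncomputable def truncAt (l x : ℝ) : ℝ := if |x| ≤ l then x else 0

section TruncAt

variable {l t x : ℝ}

lemma truncAt_of_abs_le (h : |x| ≤ l) : truncAt l x = x := if_pos h

lemma abs_truncAt_le (hl : 0 ≤ l) : |truncAt l x| ≤ l := by
  unfold truncAt; split_ifs with h <;> simp [h, hl]

lemma abs_truncAt_le_abs : |truncAt l x| ≤ |x| := by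
  unfold truncAt; split_ifs <;> simp

lemma max_lt_abs_of_lt_abs_sub_truncAt (ht : 0 ≤ t) (h : t < |x - truncAt l x|) :
    max l t < |x| := by
  unfold truncAt at h
  split_ifs at h with hx
  · rw [sub_self, abs_zero] at h; linarith
  · exact max_lt (not_le.1 hx) (by simpa using h)

lemma measurable_truncAt : Measurable (truncAt l) :=
  Measurable.ite (measurableSet_le measurable_id.abs measurable_const) measurable_id
    measurable_const

end TruncAt

section LayerCake

variable {Ω : Type*} [MeasurableSpace Ω] {μ : Measure Ω} {X : Ω → ℝ} {C α l : ℝ}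

lemma MeasureTheory.Integrable.truncAt (hX : Integrable X μ) :
    Integrable (fun ω => truncAt l (X ω)) μ :=
  hX.mono (measurable_truncAt.comp_aemeasurable hX.aemeasurable).aestronglyMeasurable
    (ae_of_all _ fun _ => abs_truncAt_le_abs)

lemma memLp_truncAt [IsFiniteMeasure μ] (hX : AEMeasurable X μ) (hl : 0 ≤ l)
    (p : ℝ≥0∞) : MemLp (fun ω => truncAt l (X ω)) p μ :=
  MemLp.of_bound (measurable_truncAt.comp_aemeasurable hX).aestronglyMeasurable l
    (ae_of_all _ fun _ => abs_truncAt_le hl)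

lemma integral_le_setIntegral_of_measureReal_lt_le {f : Ω → ℝ} {g : ℝ → ℝ}
    (hf : Integrable f μ) (hf0 : 0 ≤ᵐ[μ] f) (hg : IntegrableOn g (Ioi 0))
    (hfg : ∀ t, 0 < t → μ.real {ω | t < f ω} ≤ g t) :
    ∫ ω, f ω ∂μ ≤ ∫ t in Ioi 0, g t := by
  rw [hf.integral_eq_integral_meas_lt hf0]
  exact integral_mono_of_nonneg (ae_of_all _ fun _ => measureReal_nonneg) hg
    ((ae_restrict_iff' measurableSet_Ioi).2 (ae_of_all _ hfg))

lemma integral_truncAt_sq_le [IsFiniteMeasure μ] (hX : AEMeasurable X μ) (hα : α < 2)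
    (htail : ∀ t, 0 < t → μ.real {ω | t < |X ω|} ≤ C * t ^ (-α)) (hl : 0 < l) :
    ∫ ω, truncAt l (X ω) ^ 2 ∂μ ≤ 2 * C / (2 - α) * l ^ (2 - α) := by
  set g : ℝ → ℝ := (Ioc 0 (l ^ 2)).indicator fun t => C * t ^ (-(α / 2)) with g_def
  have hg : IntegrableOn g (Ioi 0) := by
    refine (IntegrableOn.integrable_indicator ?_ measurableSet_Ioc).integrableOn
    have := intervalIntegral.intervalIntegrable_rpow' (a := 0) (b := l ^ 2) (r := -(α / 2))
      (by linarith)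
    rw [intervalIntegrable_iff_integrableOn_Ioc_of_le (by positivity)] at this
    exact this.const_mul C
  refine (integral_le_setIntegral_of_measureReal_lt_le (memLp_truncAt hX hl.le 2).integrable_sq
    (ae_of_all _ fun _ => sq_nonneg _) hg fun t ht => ?_).trans_eq ?_
  · rcases le_or_gt t (l ^ 2) with htl | htl
    · have hsub : {ω | t < truncAt l (X ω) ^ 2} ⊆ {ω | √t < |X ω|} := fun ω hω =>
        calc √t < √(truncAt l (X ω) ^ 2) := Real.sqrt_lt_sqrt ht.le hω
          _ = |truncAt l (X ω)| := Real.sqrt_sq_eq_abs _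
          _ ≤ |X ω| := abs_truncAt_le_abs
      calc μ.real {ω | t < truncAt l (X ω) ^ 2} ≤ μ.real {ω | √t < |X ω|} := measureReal_mono hsub
        _ ≤ C * √t ^ (-α) := htail _ (Real.sqrt_pos.2 ht)
        _ = g t := by
          rw [g_def, indicator_of_mem (show t ∈ Ioc 0 (l ^ 2) from ⟨ht, htl⟩), Real.sqrt_eq_rpow,
            ← Real.rpow_mul ht.le]
          ring_nf
    · have hempty : {ω | t < truncAt l (X ω) ^ 2} = ∅ := by
        refine eq_empty_of_forall_notMem fun ω hω => ?_
        have : truncAt l (X ω) ^ 2 ≤ l ^ 2 := sq_le_sq' (abs_le.1 (abs_truncAt_le hl.le)).1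
          (abs_le.1 (abs_truncAt_le hl.le)).2
        exact absurd (htl.trans hω) this.not_gt
      rw [hempty, measureReal_empty, g_def,
        indicator_of_notMem fun h : t ∈ Ioc 0 (l ^ 2) => htl.not_ge h.2]
  · rw [integral_indicator measurableSet_Ioc, Measure.restrict_restrict measurableSet_Ioc,
      inter_eq_self_of_subset_left Ioc_subset_Ioi_self,
      ← intervalIntegral.integral_of_le (by positivity), intervalIntegral.integral_const_mul,
      integral_rpow (Or.inl (by linarith)), Real.zero_rpow (by linarith),
      ← Real.rpow_natCast, ← Real.rpow_mul hl.le]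
    push_cast
    rw [show (2 : ℝ) * (-(α / 2) + 1) = 2 - α by ring]
    field_simp
    ring

lemma integral_abs_sub_truncAt_le (hX : Integrable X μ) (hα : 1 < α)
    (htail : ∀ t, 0 < t → μ.real {ω | t < |X ω|} ≤ C * t ^ (-α)) (hl : 0 < l) :
    ∫ ω, |X ω - truncAt l (X ω)| ∂μ ≤ α / (α - 1) * C * l ^ (1 - α) := by
  set g : ℝ → ℝ := fun t => C * max l t ^ (-α)
  have hg_Ioc : EqOn g (fun _ => C * l ^ (-α)) (Ioc 0 l) := fun t ht => by
    simp only [g, max_eq_left ht.2]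
  have hg_Ioi : EqOn g (fun t => C * t ^ (-α)) (Ioi l) := fun t ht => by
    simp only [g, max_eq_right (le_of_lt (show l < t from ht))]
  have hg₁ : IntegrableOn g (Ioc 0 l) := by
    rw [integrableOn_congr_fun hg_Ioc measurableSet_Ioc]
    exact integrableOn_const (by simp [Real.volume_Ioc])
  have hg₂ : IntegrableOn g (Ioi l) := by
    rw [integrableOn_congr_fun hg_Ioi measurableSet_Ioi]
    exact (integrableOn_Ioi_rpow_of_lt (by linarith) hl).const_mul C
  have hg : IntegrableOn g (Ioi 0) := by
    rw [← Ioc_union_Ioi_eq_Ioi hl.le]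
    exact hg₁.union hg₂
  refine (integral_le_setIntegral_of_measureReal_lt_le (hX.sub hX.truncAt).abs
    (ae_of_all _ fun _ => abs_nonneg _) hg fun t ht => ?_).trans_eq ?_
  · exact (measureReal_mono (fun ω => max_lt_abs_of_lt_abs_sub_truncAt ht.le)
      (hX.measure_norm_gt_lt_top (lt_max_of_lt_left hl)).ne).trans
      (htail _ (lt_max_of_lt_left hl))
  · rw [← Ioc_union_Ioi_eq_Ioi hl.le, setIntegral_union (Ioc_disjoint_Ioi le_rfl)
      measurableSet_Ioi hg₁ hg₂, setIntegral_congr_fun measurableSet_Ioc hg_Ioc,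
      setIntegral_congr_fun measurableSet_Ioi hg_Ioi, setIntegral_const, integral_const_mul,
      integral_Ioi_rpow_of_lt (by linarith) hl, measureReal_def, Real.volume_Ioc,
      sub_zero, ENNReal.toReal_ofReal hl.le, smul_eq_mul,
      show 1 - α = -α + 1 by ring, Real.rpow_add hl, Real.rpow_one]
    have : α - 1 ≠ 0 := by linarith
    have : -α + 1 ≠ 0 := by linarith
    field_simp
    ring

lemma abs_integral_truncAt_le (hX : Integrable X μ) (hX0 : ∫ ω, X ω ∂μ = 0) (hα : 1 < α)
    (htail : ∀ t, 0 < t → μ.real {ω | t < |X ω|} ≤ C * t ^ (-α)) (hl : 0 < l) :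
    |∫ ω, truncAt l (X ω) ∂μ| ≤ α / (α - 1) * C * l ^ (1 - α) := by
  have : ∫ ω, truncAt l (X ω) ∂μ = -∫ ω, X ω - truncAt l (X ω) ∂μ := by
    rw [integral_sub hX hX.truncAt, hX0]; ring
  rw [this, abs_neg]
  exact abs_integral_le_integral_abs.trans (integral_abs_sub_truncAt_le hX hα htail hl)

end LayerCake

section IndependentSums

variable {Ω ι : Type*} [MeasurableSpace Ω] {μ : Measure Ω} {X : ι → Ω → ℝ} {C : ι → ℝ}
  {α l : ℝ}

lemma variance_sum_truncAt_le [IsProbabilityMeasure μ] (hindep : iIndepFun X μ)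
    (hX : ∀ k, AEMeasurable (X k) μ) (hα : α < 2)
    (htail : ∀ k t, 0 < t → μ.real {ω | t < |X k ω|} ≤ C k * t ^ (-α)) (hl : 0 < l)
    (s : Finset ι) :
    Var[∑ k ∈ s, truncAt l ∘ X k; μ] ≤ 2 / (2 - α) * (∑ k ∈ s, C k) * l ^ (2 - α) := by
  rw [IndepFun.variance_sum (X := fun k => truncAt l ∘ X k)
    (fun k _ => memLp_truncAt (hX k) hl.le 2)
    fun i _ j _ hij => (hindep.comp _ fun _ => measurable_truncAt).indepFun hij,
    Finset.mul_sum, Finset.sum_mul]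
  refine Finset.sum_le_sum fun k _ => ?_
  calc Var[truncAt l ∘ X k; μ] ≤ ∫ ω, truncAt l (X k ω) ^ 2 ∂μ :=
        variance_le_expectation_sq
          (measurable_truncAt.comp_aemeasurable (hX k)).aestronglyMeasurable
    _ ≤ 2 * C k / (2 - α) * l ^ (2 - α) := integral_truncAt_sq_le (hX k) hα (htail k) hl
    _ = 2 / (2 - α) * C k * l ^ (2 - α) := by ring

lemma abs_integral_sum_truncAt_le (hint : ∀ k, Integrable (X k) μ)
    (hmean : ∀ k, ∫ ω, X k ω ∂μ = 0) (hα : 1 < α)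
    (htail : ∀ k t, 0 < t → μ.real {ω | t < |X k ω|} ≤ C k * t ^ (-α)) (hl : 0 < l)
    (s : Finset ι) :
    |∫ ω, (∑ k ∈ s, truncAt l ∘ X k) ω ∂μ| ≤ α / (α - 1) * (∑ k ∈ s, C k) * l ^ (1 - α) := by
  simp only [Finset.sum_apply, Function.comp_apply]
  rw [integral_finsetSum _ fun k _ => (hint k).truncAt, Finset.mul_sum, Finset.sum_mul]
  exact (Finset.abs_sum_le_sum_abs _ _).trans <| Finset.sum_le_sum fun k _ =>
    abs_integral_truncAt_le (hint k) (hmean k) hα (htail k) hl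

lemma measure_lt_abs_sum_truncAt_le [IsProbabilityMeasure μ] (hindep : iIndepFun X μ)
    (hint : ∀ k, Integrable (X k) μ) (hmean : ∀ k, ∫ ω, X k ω ∂μ = 0) (hα : α ∈ Ioo 1 2)
    (htail : ∀ k t, 0 < t → μ.real {ω | t < |X k ω|} ≤ C k * t ^ (-α)) (hl : 0 < l)
    (s : Finset ι) (hlarge : 2 * α / (α - 1) * ∑ k ∈ s, C k ≤ l ^ α) :
    μ {ω | l < |(∑ k ∈ s, truncAt l ∘ X k) ω|}
      ≤ ENNReal.ofReal (8 / (2 - α) * (∑ k ∈ s, C k) * l ^ (-α)) := by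
  obtain ⟨hα1, hα2⟩ := hα
  set W := ∑ k ∈ s, truncAt l ∘ X k
  have hmeanW : |∫ ω, W ω ∂μ| ≤ l / 2 := by
    refine (abs_integral_sum_truncAt_le hint hmean hα1 htail hl s).trans ?_
    have hlarge' : 2 * (α / (α - 1) * ∑ k ∈ s, C k) ≤ l ^ α := by
      convert hlarge using 1; ring
    calc α / (α - 1) * (∑ k ∈ s, C k) * l ^ (1 - α) ≤ l ^ α / 2 * l ^ (1 - α) := by
          gcongr; linarith
      _ = l / 2 := by rw [div_mul_eq_mul_div, ← Real.rpow_add hl]; norm_num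
  have hsub : {ω | l < |W ω|} ⊆ {ω | l / 2 ≤ |W ω - ∫ ω, W ω ∂μ|} := fun ω hω => by
    have := abs_sub_abs_le_abs_sub (W ω) (∫ ω, W ω ∂μ)
    simp only [mem_ofPred_eq] at hω ⊢
    linarith
  have hW : MemLp W 2 μ := memLp_finsetSum' _ fun k _ => memLp_truncAt (hint k).aemeasurable hl.le 2
  refine (measure_mono hsub).trans <| (meas_ge_le_variance_div_sq hW (by positivity)).trans <|
    ENNReal.ofReal_le_ofReal ?_
  have hvar := variance_sum_truncAt_le hindep (fun k => (hint k).aemeasurable) hα2 htail hl s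
  have h2α : l ^ (2 - α) / (l / 2) ^ 2 = 4 * l ^ (-α) := by
    rw [Real.rpow_sub hl, Real.rpow_neg hl.le, Real.rpow_two]
    field_simp
    ring
  calc Var[W; μ] / (l / 2) ^ 2 ≤ 2 / (2 - α) * (∑ k ∈ s, C k) * l ^ (2 - α) / (l / 2) ^ 2 := by
        gcongr
    _ = 8 / (2 - α) * (∑ k ∈ s, C k) * l ^ (-α) := by
        rw [mul_div_assoc, h2α]; ring

end IndependentSums

section Tails

variable {Ω : Type*} [MeasurableSpace Ω] {μ : Measure Ω}

lemma measureReal_lt_abs_const_mul_le {η : Ω → ℝ} {K α : ℝ} (hα : 0 < α)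
    (htail : ∀ t, 0 < t → t ^ α * μ.real {ω | t < |η ω|} ≤ K) (c : ℝ) {t : ℝ} (ht : 0 < t) :
    μ.real {ω | t < |c * η ω|} ≤ K * |c| ^ α * t ^ (-α) := by
  rcases eq_or_ne c 0 with rfl | hc
  · simp [ht.not_gt, Real.zero_rpow hα.ne']
  have hc' : 0 < |c| := abs_pos.2 hc
  have hset : {ω | t < |c * η ω|} = {ω | t / |c| < |η ω|} := by
    ext ω; simp only [mem_ofPred_eq, abs_mul, div_lt_iff₀ hc', mul_comm]
  have hpos : 0 < (t / |c|) ^ α := by positivity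
  calc μ.real {ω | t < |c * η ω|} ≤ K / (t / |c|) ^ α := by
        rw [hset, le_div_iff₀ hpos, mul_comm]; exact htail _ (by positivity)
    _ = K * |c| ^ α * t ^ (-α) := by
        rw [Real.div_rpow ht.le hc'.le, Real.rpow_neg ht.le]; field_simp

lemma measure_lt_abs_le_of_hasSum_s4 {X : ℕ → Ω → ℝ} {S : Ω → ℝ} {l : ℝ} {B : ℝ≥0∞}
    (hS : ∀ᵐ ω ∂μ, HasSum (X · ω) (S ω))
    (hB : ∀ n, μ {ω | l < |(∑ k ∈ Finset.range n, truncAt l ∘ X k) ω|} ≤ B) :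
    μ {ω | l < |S ω|} ≤ ∑' k, μ {ω | l < |X k ω|} + B := by
  set W : ℕ → Ω → ℝ := fun n => ∑ k ∈ Finset.range n, truncAt l ∘ X k
  set U := ⋃ k, {ω | l < |X k ω|}
  have hcover : {ω | l < |S ω|} ≤ᵐ[μ] (U ∪ ⋃ N, ⋂ n ≥ N, {ω | l < |W n ω|} : Set Ω) := by
    filter_upwards [hS] with ω hω hlt
    refine or_iff_not_imp_left.2 fun hU => ?_
    simp only [U, mem_iUnion, mem_ofPred_eq, not_exists, not_lt] at hU
    have hWX : ∀ n, W n ω = ∑ k ∈ Finset.range n, X k ω := fun n => by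
      simp only [W, Finset.sum_apply, Function.comp_apply, truncAt_of_abs_le (hU _)]
    obtain ⟨N, hN⟩ := eventually_atTop.1
      (((hω.tendsto_sum_nat).abs).eventually_const_lt (show l < |S ω| from hlt))
    exact mem_iUnion.2 ⟨N, mem_iInter₂.2 fun n hn => by simpa [hWX] using hN n hn⟩
  have hmono : Monotone fun N => ⋂ n ≥ N, {ω | l < |W n ω|} := fun N M hNM =>
    iInter₂_mono' fun n hn => ⟨n, hNM.trans hn, le_rfl⟩
  calc μ {ω | l < |S ω|} ≤ μ (U ∪ ⋃ N, ⋂ n ≥ N, {ω | l < |W n ω|}) := measure_mono_ae hcover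
    _ ≤ μ U + μ (⋃ N, ⋂ n ≥ N, {ω | l < |W n ω|}) := measure_union_le _ _
    _ ≤ ∑' k, μ {ω | l < |X k ω|} + B := by
      gcongr
      · exact measure_iUnion_le _
      · rw [hmono.measure_iUnion]
        exact iSup_le fun N => (measure_mono (iInter₂_subset N le_rfl)).trans (hB N)

end Tails

theorem rpow_mul_measureReal_lt_abs_le_of_hasSum {Ω : Type*} [MeasurableSpace Ω] {μ : Measure Ω}
    [IsProbabilityMeasure μ] {X : ℕ → Ω → ℝ} {C : ℕ → ℝ} {S : Ω → ℝ} {α l : ℝ}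
    (hindep : iIndepFun X μ) (hint : ∀ k, Integrable (X k) μ) (hmean : ∀ k, ∫ ω, X k ω ∂μ = 0)
    (hα : α ∈ Ioo 1 2) (htail : ∀ k t, 0 < t → μ.real {ω | t < |X k ω|} ≤ C k * t ^ (-α))
    (hC : Summable C) (hS : ∀ᵐ ω ∂μ, HasSum (X · ω) (S ω)) (hl : 0 < l) :
    l ^ α * μ.real {ω | l < |S ω|} ≤ (1 + 8 / (2 - α) + 2 * α / (α - 1)) * ∑' k, C k := by
  obtain ⟨hα1, hα2⟩ := hα
  have hC0 : ∀ k, 0 ≤ C k := fun k => by simpa using measureReal_nonneg.trans (htail k 1 one_pos)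
  set c := ∑' k, C k
  have hc : 0 ≤ c := tsum_nonneg hC0
  have hcoef : 0 ≤ 2 * α / (α - 1) := div_nonneg (by linarith) (by linarith)
  have hcoef' : 0 ≤ 8 / (2 - α) := div_nonneg (by norm_num) (by linarith)
  rcases le_or_gt (l ^ α) ((1 + 8 / (2 - α) + 2 * α / (α - 1)) * c) with hsmall | hlarge
  · calc l ^ α * μ.real {ω | l < |S ω|} ≤ l ^ α * 1 := by gcongr; exact measureReal_le_one
      _ ≤ _ := by linarith
  have hB : ∀ n, μ {ω | l < |(∑ k ∈ Finset.range n, truncAt l ∘ X k) ω|}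
      ≤ ENNReal.ofReal (8 / (2 - α) * c * l ^ (-α)) := fun n => by
    have hn : ∑ k ∈ Finset.range n, C k ≤ c := hC.sum_le_tsum _ fun k _ => hC0 k
    refine (measure_lt_abs_sum_truncAt_le hindep hint hmean ⟨hα1, hα2⟩ htail hl _ ?_).trans ?_
    · nlinarith
    · gcongr
  have hU : ∑' k, μ {ω | l < |X k ω|} ≤ ENNReal.ofReal (c * l ^ (-α)) :=
    calc ∑' k, μ {ω | l < |X k ω|} ≤ ∑' k, ENNReal.ofReal (C k * l ^ (-α)) :=
          ENNReal.tsum_le_tsum fun k =>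
            (ENNReal.le_ofReal_iff_toReal_le (measure_ne_top _ _) (by positivity [hC0 k])).2
              (htail k l hl)
      _ = ENNReal.ofReal (c * l ^ (-α)) := by
          rw [← ENNReal.ofReal_tsum_of_nonneg (fun k => by positivity [hC0 k]) (hC.mul_right _),
            tsum_mul_right]
  have hS_le := (measure_lt_abs_le_of_hasSum_s4 hS hB).trans (add_le_add_left hU _)
  rw [← ENNReal.ofReal_add (by positivity) (by positivity)] at hS_le
  calc l ^ α * μ.real {ω | l < |S ω|}
      ≤ l ^ α * (c * l ^ (-α) + 8 / (2 - α) * c * l ^ (-α)) := by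
        gcongr; exact ENNReal.toReal_le_of_le_ofReal (by positivity) hS_le
    _ = (1 + 8 / (2 - α)) * c := by
        rw [Real.rpow_neg hl.le]; field_simp
    _ ≤ (1 + 8 / (2 - α) + 2 * α / (α - 1)) * c :=
        mul_le_mul_of_nonneg_right (le_add_of_nonneg_right hcoef) hc

theorem stmt4_general {Ω : Type*} [MeasurableSpace Ω] (μ : Measure Ω) [IsProbabilityMeasure μ]
    (η : ℕ → Ω → ℝ)
    (hindep : iIndepFun η μ)
    (hint : ∀ k, Integrable (η k) μ) (hmean : ∀ k, ∫ ω, η k ω ∂μ = 0)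
    (K α : ℝ) (hα : α ∈ Set.Ioo (1 : ℝ) 2)
    (htail : ∀ k, ∀ l : ℝ, 0 < l → l ^ α * (μ {ω | l < |η k ω|}).toReal ≤ K)
    (a : ℕ → ℝ) (hsum : Summable (fun k => |a k| ^ α))
    (S : Ω → ℝ) (hS : ∀ᵐ ω ∂μ, HasSum (fun k => a k * η k ω) (S ω)) :
    ∀ l : ℝ, 0 < l →
      l ^ α * (μ {ω | l < |S ω|}).toReal
        ≤ (1 + 8 / (2 - α) + 2 * α / (α - 1)) * K * ∑' k, |a k| ^ α := by
  intro l hl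
  have key := rpow_mul_measureReal_lt_abs_le_of_hasSum (X := fun k ω => a k * η k ω)
    (C := fun k => K * |a k| ^ α)
    (hindep.comp (fun k x => a k * x) fun k => measurable_const_mul (a k))
    (fun k => (hint k).const_mul (a k))
    (fun k => by rw [integral_const_mul, hmean k, mul_zero]) hα
    (fun k t ht => measureReal_lt_abs_const_mul_le (zero_lt_one.trans hα.1) (htail k) (a k) ht)
    (hsum.mul_left K) hS hl
  rwa [tsum_mul_left, ← mul_assoc] at key

theorem stmt4 {Ω : Type*} [MeasurableSpace Ω] (μ : Measure Ω) [IsProbabilityMeasure μ]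
    (η : ℕ → Ω → ℝ) (hmeas : ∀ k, Measurable (η k))
    (hindep : iIndepFun η μ)
    (hint : ∀ k, Integrable (η k) μ) (hmean : ∀ k, ∫ ω, η k ω ∂μ = 0)
    (K α : ℝ) (hK : 0 < K) (hα : α ∈ Set.Ioo (1 : ℝ) 2)
    (htail : ∀ k, ∀ l : ℝ, 0 < l → l ^ α * (μ {ω | l < |η k ω|}).toReal ≤ K)
    (a : ℕ → ℝ) (hsum : Summable (fun k => |a k| ^ α))
    (S : Ω → ℝ) (hS : ∀ᵐ ω ∂μ, HasSum (fun k => a k * η k ω) (S ω)) :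
    ∀ l : ℝ, 0 < l →
      l ^ α * (μ {ω | l < |S ω|}).toReal
        ≤ (1 + 8 / (2 - α) + 2 * α / (α - 1)) * K * ∑' k, |a k| ^ α :=
  stmt4_general μ η hindep hint hmean K α hα htail a hsum S hS
end

section
/- Let g_{1,γ} be the density on (0,∞) of a measure with Laplace transform ∫_0^∞ e^{-us} g_{1,γ}(s) ds = e^{-u^γ} for u > 0, and define G̅(t,x) = ∫_0^∞ (4π t^{1/γ} r)^{-d/2} exp(-|x|²/(4 t^{1/γ} r)) g_{1,γ}(r) dr. Then for any p > 1 there exist constants c₁, c₂ > 0 depending on d, p, γ such that c₁ t^{-(d/(2γ))(p-1)} ≤ ∫_{ℝ^d} G̅(t,x)^p dx ≤ c₂ t^{-(d/(2γ))(p-1)} for all t > 0, provided C_{d,γ} := ∫_1^∞ r^{-d/2} g_{1,γ}(r) dr < ∞ (lower bound) and the corresponding upper-bound integrability holds. -/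
open MeasureTheory

lemma aux_pow_le_factorial_mul_exp (x : ℝ) (hx : 0 ≤ x) (n : ℕ) :
    x ^ n ≤ (Nat.factorial n : ℝ) * Real.exp x := by
  have h1 : x ^ n / (Nat.factorial n : ℝ) ≤ ∑ i ∈ Finset.range (n + 1), x ^ i / (Nat.factorial i : ℝ) :=
    Finset.single_le_sum (f := fun i => x ^ i / (Nat.factorial i : ℝ))
      (fun i _ => by positivity) (Finset.self_mem_range_succ n)
  have h2 := Real.sum_le_exp_of_nonneg hx (n + 1)
  have h3 : (0:ℝ) < (Nat.factorial n : ℝ) := by exact_mod_cast Nat.factorial_pos n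
  have h4 : x ^ n / (Nat.factorial n : ℝ) ≤ Real.exp x := h1.trans h2
  calc x ^ n = (x ^ n / (Nat.factorial n : ℝ)) * (Nat.factorial n : ℝ) := by field_simp
    _ ≤ Real.exp x * (Nat.factorial n : ℝ) := by
        exact mul_le_mul_of_nonneg_right h4 h3.le
    _ = (Nat.factorial n : ℝ) * Real.exp x := mul_comm _ _

theorem stmt15 (d : ℕ) (hd : 0 < d) (γ p : ℝ) (hγ : 0 < γ) (hp : 1 < p)
    (g : ℝ → ℝ) (hg_meas : Measurable g) (hg_nonneg : ∀ r, 0 ≤ g r)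
    (hg_laplace : ∀ u : ℝ, 0 < u →
      ∫ s in Set.Ioi (0 : ℝ), Real.exp (-u * s) * g s = Real.exp (-u ^ γ))
    (G : ℝ → EuclideanSpace ℝ (Fin d) → ℝ)
    (hG : ∀ t x, G t x = ∫ r in Set.Ioi (0 : ℝ),
      (4 * Real.pi * t ^ (1 / γ) * r) ^ (-(d : ℝ) / 2)
        * Real.exp (-‖x‖ ^ 2 / (4 * t ^ (1 / γ) * r)) * g r)
    (hC : IntegrableOn (fun r : ℝ => r ^ (-(d : ℝ) / 2) * g r) (Set.Ioi 1))
    (hint : ∀ t : ℝ, 0 < t → Integrable (fun x : EuclideanSpace ℝ (Fin d) => G t x ^ p)) :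
    ∃ c₁ : ℝ, 0 < c₁ ∧ ∃ c₂ : ℝ, 0 < c₂ ∧ ∀ t : ℝ, 0 < t →
      c₁ * t ^ (-((d : ℝ) / (2 * γ)) * (p - 1)) ≤ (∫ x, G t x ^ p) ∧
      (∫ x, G t x ^ p) ≤ c₂ * t ^ (-((d : ℝ) / (2 * γ)) * (p - 1)) := by
  have hπ : (0:ℝ) < Real.pi := Real.pi_pos
  -- simplified formula at t = 1
  have hG1 : ∀ y : EuclideanSpace ℝ (Fin d), G 1 y
      = ∫ r in Set.Ioi (0:ℝ),
          (4 * Real.pi * r) ^ (-(d:ℝ)/2) * Real.exp (-‖y‖^2 / (4 * r)) * g r := by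
    intro y
    rw [hG]
    simp [Real.one_rpow]
  -- nonnegativity of G 1
  have hGnn : ∀ y : EuclideanSpace ℝ (Fin d), 0 ≤ G 1 y := by
    intro y
    rw [hG1 y]
    apply setIntegral_nonneg measurableSet_Ioi
    intro r hr
    have hr0 : (0:ℝ) < r := hr
    have h1 : (0:ℝ) < 4 * Real.pi * r := by positivity
    exact mul_nonneg (mul_nonneg (Real.rpow_nonneg h1.le _) (Real.exp_pos _).le)
      (hg_nonneg r)
  -- Laplace transform at u = 1
  have hL1 : ∫ s in Set.Ioi (0:ℝ), Real.exp (-1 * s) * g s = Real.exp (-1) := by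
    have h := hg_laplace 1 one_pos
    rwa [Real.one_rpow] at h
  have hLint : IntegrableOn (fun s => Real.exp (-1 * s) * g s) (Set.Ioi (0:ℝ)) := by
    by_contra h
    have h0 : ∫ s in Set.Ioi (0:ℝ), Real.exp (-1 * s) * g s = 0 := integral_undef h
    rw [hL1] at h0
    exact (Real.exp_pos (-1)).ne' h0
  -- positivity of G 1 y for y ≠ 0
  have hGpos : ∀ y : EuclideanSpace ℝ (Fin d), y ≠ 0 → 0 < G 1 y := by
    intro y hy
    have hb0 : (0:ℝ) < ‖y‖^2 := by
      have : 0 < ‖y‖ := norm_pos_iff.mpr hy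
      positivity
    set f : ℝ → ℝ :=
      fun r => (4 * Real.pi * r) ^ (-(d:ℝ)/2) * Real.exp (-‖y‖^2 / (4 * r)) * g r with hfdef
    have hfm : Measurable f := by
      apply Measurable.mul _ hg_meas
      fun_prop
    have hfnn : ∀ r ∈ Set.Ioi (0:ℝ), 0 ≤ f r := by
      intro r hr
      have hr0 : (0:ℝ) < r := hr
      have h1 : (0:ℝ) < 4 * Real.pi * r := by positivity
      exact mul_nonneg (mul_nonneg (Real.rpow_nonneg h1.le _) (Real.exp_pos _).le)
        (hg_nonneg r)
    -- integrability on (1, ∞)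
    have hint1 : IntegrableOn f (Set.Ioi (1:ℝ)) := by
      refine Integrable.mono (hC.const_mul ((4 * Real.pi) ^ (-(d:ℝ)/2)))
        hfm.aestronglyMeasurable ?_
      rw [ae_restrict_iff' measurableSet_Ioi]
      refine ae_of_all _ fun r hr => ?_
      have hr1 : (1:ℝ) < r := hr
      have hr0 : (0:ℝ) < r := lt_trans one_pos hr1
      have hRHSnn : 0 ≤ (4 * Real.pi) ^ (-(d:ℝ)/2) * (r ^ (-(d:ℝ)/2) * g r) :=
        mul_nonneg (Real.rpow_nonneg (by positivity) _)
          (mul_nonneg (Real.rpow_nonneg hr0.le _) (hg_nonneg r))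
      rw [Real.norm_eq_abs, Real.norm_eq_abs, abs_of_nonneg (hfnn r hr0),
        abs_of_nonneg hRHSnn]
      have hA : (4 * Real.pi * r) ^ (-(d:ℝ)/2)
          = (4 * Real.pi) ^ (-(d:ℝ)/2) * r ^ (-(d:ℝ)/2) :=
        Real.mul_rpow (by positivity) hr0.le
      have hE : Real.exp (-‖y‖^2 / (4 * r)) ≤ 1 :=
        Real.exp_le_one_iff.mpr (by
          apply div_nonpos_of_nonpos_of_nonneg
          · simpa using hb0.le
          · positivity)
      calc f r ≤ (4 * Real.pi * r) ^ (-(d:ℝ)/2) * 1 * g r := by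
            exact mul_le_mul_of_nonneg_right
              (mul_le_mul_of_nonneg_left hE
                (Real.rpow_nonneg (by positivity) _)) (hg_nonneg r)
        _ = (4 * Real.pi) ^ (-(d:ℝ)/2) * (r ^ (-(d:ℝ)/2) * g r) := by
            rw [mul_one, hA]; ring
    -- integrability on (0, 1]
    have hint2 : IntegrableOn f (Set.Ioc (0:ℝ) 1) := by
      set K0 : ℝ := (4 * Real.pi) ^ (-(d:ℝ)/2) * ((Nat.factorial d : ℝ) / (‖y‖^2) ^ d) * 4 ^ d with hK0def
      have hK0nn : 0 ≤ K0 := by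
        apply mul_nonneg (mul_nonneg (Real.rpow_nonneg (by positivity) _) _) (by positivity)
        exact div_nonneg (by positivity) (pow_nonneg hb0.le d)
      set K : ℝ := K0 * Real.exp 1 with hKdef
      have hKnn : 0 ≤ K := mul_nonneg hK0nn (Real.exp_pos 1).le
      refine Integrable.mono
        (((hLint.mono_set Set.Ioc_subset_Ioi_self)).const_mul K)
        hfm.aestronglyMeasurable ?_
      rw [ae_restrict_iff' measurableSet_Ioc]
      refine ae_of_all _ fun r hr => ?_
      obtain ⟨hr0, hr1⟩ := hr
      have hRHSnn : 0 ≤ K * (Real.exp (-1 * r) * g r) :=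
        mul_nonneg hKnn (mul_nonneg (Real.exp_pos _).le (hg_nonneg r))
      rw [Real.norm_eq_abs, Real.norm_eq_abs, abs_of_nonneg (hfnn r hr0),
        abs_of_nonneg hRHSnn]
      -- the exponential bound
      have hyr : (0:ℝ) < ‖y‖^2 / (4 * r) := by positivity
      have hpow := aux_pow_le_factorial_mul_exp (‖y‖^2 / (4 * r)) hyr.le d
      have hexp : Real.exp (-(‖y‖^2 / (4 * r))) ≤ (Nat.factorial d : ℝ) * (4 * r) ^ d / (‖y‖^2) ^ d := by
        rw [div_pow] at hpow
        have h2 : (‖y‖^2) ^ d ≤ (Nat.factorial d : ℝ) * Real.exp (‖y‖^2 / (4 * r)) * (4 * r) ^ d :=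
          (div_le_iff₀ (by positivity)).mp hpow
        rw [le_div_iff₀ (pow_pos hb0 d), Real.exp_neg,
          inv_mul_eq_div, div_le_iff₀ (Real.exp_pos _)]
        calc (‖y‖^2) ^ d ≤ (Nat.factorial d : ℝ) * Real.exp (‖y‖^2 / (4 * r)) * (4 * r) ^ d := h2
          _ = (Nat.factorial d : ℝ) * (4 * r) ^ d * Real.exp (‖y‖^2 / (4 * r)) := by ring
      have hscalar : (4 * Real.pi * r) ^ (-(d:ℝ)/2) * Real.exp (-‖y‖^2 / (4 * r)) ≤ K0 := by
        have hA : (4 * Real.pi * r) ^ (-(d:ℝ)/2)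
            = (4 * Real.pi) ^ (-(d:ℝ)/2) * r ^ (-(d:ℝ)/2) :=
          Real.mul_rpow (by positivity) hr0.le
        have hrd : (r:ℝ) ^ d = r ^ ((d:ℕ):ℝ) := (Real.rpow_natCast r d).symm
        calc (4 * Real.pi * r) ^ (-(d:ℝ)/2) * Real.exp (-‖y‖^2 / (4 * r))
            = (4 * Real.pi) ^ (-(d:ℝ)/2) * (r ^ (-(d:ℝ)/2) * Real.exp (-(‖y‖^2 / (4 * r)))) := by
              rw [hA, neg_div]; ring
          _ ≤ (4 * Real.pi) ^ (-(d:ℝ)/2)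
              * (r ^ (-(d:ℝ)/2) * ((Nat.factorial d : ℝ) * (4 * r) ^ d / (‖y‖^2) ^ d)) := by
              apply mul_le_mul_of_nonneg_left _ (Real.rpow_nonneg (by positivity) _)
              exact mul_le_mul_of_nonneg_left hexp (Real.rpow_nonneg hr0.le _)
          _ = K0 * (r ^ (-(d:ℝ)/2) * r ^ ((d:ℕ):ℝ)) := by
              rw [hK0def, mul_pow, ← hrd]; ring
          _ = K0 * r ^ (-(d:ℝ)/2 + (d:ℕ)) := by rw [← Real.rpow_add hr0]
          _ ≤ K0 * 1 := by
              apply mul_le_mul_of_nonneg_left _ hK0nn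
              apply Real.rpow_le_one hr0.le hr1
              have : (0:ℝ) ≤ (d:ℝ) := Nat.cast_nonneg d
              push_cast
              linarith
          _ = K0 := mul_one _
      have hone : (1:ℝ) ≤ Real.exp 1 * Real.exp (-1 * r) := by
        rw [← Real.exp_add]
        exact Real.one_le_exp (by linarith)
      calc f r = ((4 * Real.pi * r) ^ (-(d:ℝ)/2) * Real.exp (-‖y‖^2 / (4 * r))) * g r := rfl
        _ ≤ K0 * g r := mul_le_mul_of_nonneg_right hscalar (hg_nonneg r)
        _ = K0 * 1 * g r := by rw [mul_one]
        _ ≤ K0 * (Real.exp 1 * Real.exp (-1 * r)) * g r := by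
            exact mul_le_mul_of_nonneg_right
              (mul_le_mul_of_nonneg_left hone hK0nn) (hg_nonneg r)
        _ = K * (Real.exp (-1 * r) * g r) := by rw [hKdef]; ring
    have hfint : IntegrableOn f (Set.Ioi (0:ℝ)) := by
      have hu : Set.Ioc (0:ℝ) 1 ∪ Set.Ioi 1 = Set.Ioi 0 := Set.Ioc_union_Ioi_eq_Ioi zero_le_one
      rw [← hu]
      exact hint2.union hint1
    have hne : (∫ r in Set.Ioi (0:ℝ), f r) ≠ 0 := by
      intro h0
      have hae : f =ᵐ[volume.restrict (Set.Ioi (0:ℝ))] 0 :=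
        (integral_eq_zero_iff_of_nonneg_ae
          ((ae_restrict_iff' measurableSet_Ioi).mpr (ae_of_all _ hfnn)) hfint).mp h0
      have hg0 : (fun s => Real.exp (-1 * s) * g s) =ᵐ[volume.restrict (Set.Ioi (0:ℝ))] 0 := by
        filter_upwards [hae, ae_restrict_mem measurableSet_Ioi] with r h1 h2
        have hr0 : (0:ℝ) < r := h2
        have hApos : (0:ℝ) < (4 * Real.pi * r) ^ (-(d:ℝ)/2) :=
          Real.rpow_pos_of_pos (by positivity) _
        have hgr : g r = 0 := by
          by_contra hgr
          have hgpos : 0 < g r := lt_of_le_of_ne (hg_nonneg r) (Ne.symm hgr)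
          have hfpos : 0 < f r := mul_pos (mul_pos hApos (Real.exp_pos _)) hgpos
          rw [h1] at hfpos
          exact lt_irrefl _ hfpos
        simp [hgr]
      have h00 : ∫ s in Set.Ioi (0:ℝ), Real.exp (-1 * s) * g s = 0 := by
        rw [integral_congr_ae hg0]
        simp
      rw [hL1] at h00
      exact (Real.exp_pos (-1)).ne' h00
    rw [hG1 y]
    exact lt_of_le_of_ne (setIntegral_nonneg measurableSet_Ioi hfnn) (Ne.symm hne)
  -- nontriviality and positivity of the integral at t = 1
  have hnt : Nontrivial (EuclideanSpace ℝ (Fin d)) := by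
    refine ⟨0, EuclideanSpace.single ⟨0, hd⟩ 1, fun h => ?_⟩
    have h2 := congrArg (fun z : EuclideanSpace ℝ (Fin d) => z ⟨0, hd⟩) h
    simp [EuclideanSpace.single_apply] at h2
  have hInn : 0 ≤ ∫ x, G 1 x ^ p :=
    integral_nonneg fun x => Real.rpow_nonneg (hGnn x) p
  have hIpos : 0 < ∫ x, G 1 x ^ p := by
    refine lt_of_le_of_ne hInn (Ne.symm fun h0 => ?_)
    have hae : (fun x : EuclideanSpace ℝ (Fin d) => G 1 x ^ p) =ᵐ[volume] 0 :=
      (integral_eq_zero_iff_of_nonneg_ae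
        (ae_of_all _ fun x => Real.rpow_nonneg (hGnn x) p) (hint 1 one_pos)).mp h0
    have hne0 : ∀ᵐ x : EuclideanSpace ℝ (Fin d), x ≠ 0 := by
      rw [ae_iff]
      have : {x : EuclideanSpace ℝ (Fin d) | ¬x ≠ 0} = {0} := by
        ext x; simp
      rw [this]
      exact measure_singleton 0
    obtain ⟨x, hx1, hx2⟩ := (hae.and hne0).exists
    exact (Real.rpow_pos_of_pos (hGpos x hx2) p).ne' hx1
  -- the scaling identity
  have key : ∀ t : ℝ, 0 < t →
      ∫ x, G t x ^ p = (∫ x, G 1 x ^ p) * t ^ (-((d:ℝ)/(2*γ)) * (p-1)) := by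
    intro t ht
    have hτ : 0 < t ^ (1/γ) := Real.rpow_pos_of_pos ht _
    set c : ℝ := (t ^ (1/γ)) ^ (-(1/2) : ℝ) with hcdef
    have hc : 0 < c := Real.rpow_pos_of_pos hτ _
    have hc2 : c ^ 2 = (t ^ (1/γ))⁻¹ := by
      rw [hcdef, ← Real.rpow_natCast ((t ^ (1/γ)) ^ (-(1/2):ℝ)) 2, ← Real.rpow_mul hτ.le]
      norm_num [Real.rpow_neg_one]
    have hscale : ∀ x : EuclideanSpace ℝ (Fin d),
        G t x = (t ^ (1/γ)) ^ (-(d:ℝ)/2) * G 1 (c • x) := by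
      intro x
      rw [hG t x, hG 1 (c • x), ← integral_const_mul]
      refine setIntegral_congr_fun measurableSet_Ioi fun r hr => ?_
      have hr0 : (0:ℝ) < r := hr
      have h1 : (1:ℝ) ^ (1/γ) = 1 := Real.one_rpow _
      rw [h1]
      have hnorm : ‖c • x‖^2 = (t ^ (1/γ))⁻¹ * ‖x‖^2 := by
        rw [norm_smul, Real.norm_eq_abs, abs_of_pos hc, mul_pow, hc2]
      rw [hnorm]
      have hbase : (4 * Real.pi * t ^ (1/γ) * r) ^ (-(d:ℝ)/2)
          = (t ^ (1/γ)) ^ (-(d:ℝ)/2) * (4 * Real.pi * r) ^ (-(d:ℝ)/2) := by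
        have h2 : 4 * Real.pi * t ^ (1/γ) * r = t ^ (1/γ) * (4 * Real.pi * r) := by ring
        rw [h2, Real.mul_rpow hτ.le (by positivity)]
      rw [hbase]
      have hexparg : Real.exp (-‖x‖^2 / (4 * t ^ (1/γ) * r))
          = Real.exp (-((t ^ (1/γ))⁻¹ * ‖x‖^2) / (4 * 1 * r)) := by
        congr 1
        field_simp
      rw [hexparg]
      ring
    have hrank : Module.finrank ℝ (EuclideanSpace ℝ (Fin d)) = d := finrank_euclideanSpace_fin
    have hcd : |((c ^ Module.finrank ℝ (EuclideanSpace ℝ (Fin d)) : ℝ))⁻¹|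
        = (t ^ (1/γ)) ^ ((d:ℝ)/2) := by
      rw [hrank]
      have h1 : (c:ℝ) ^ d = (t ^ (1/γ)) ^ (-(d:ℝ)/2) := by
        rw [hcdef, ← Real.rpow_natCast ((t ^ (1/γ)) ^ (-(1/2):ℝ)) d, ← Real.rpow_mul hτ.le]
        congr 1
        ring
      rw [h1, ← Real.rpow_neg hτ.le, abs_of_pos (Real.rpow_pos_of_pos hτ _)]
      congr 1
      ring
    calc ∫ x, G t x ^ p
        = ∫ x, ((t ^ (1/γ)) ^ (-(d:ℝ)/2)) ^ p * ((fun y => G 1 y ^ p) (c • x)) := by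
          refine integral_congr_ae (ae_of_all _ fun x => ?_)
          simp only
          rw [hscale x, Real.mul_rpow (Real.rpow_nonneg hτ.le _) (hGnn _)]
      _ = ((t ^ (1/γ)) ^ (-(d:ℝ)/2)) ^ p * ∫ x, (fun y => G 1 y ^ p) (c • x) :=
          integral_const_mul _ _
      _ = ((t ^ (1/γ)) ^ (-(d:ℝ)/2)) ^ p
          * (|((c ^ Module.finrank ℝ (EuclideanSpace ℝ (Fin d)) : ℝ))⁻¹|
            • ∫ y, G 1 y ^ p) := by
          rw [MeasureTheory.Measure.integral_comp_smul volume (fun y => G 1 y ^ p) c]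
      _ = ((t ^ (1/γ)) ^ (-(d:ℝ)/2)) ^ p
          * ((t ^ (1/γ)) ^ ((d:ℝ)/2) * ∫ y, G 1 y ^ p) := by
          rw [hcd, smul_eq_mul]
      _ = ((t ^ (1/γ)) ^ (-(d:ℝ)/2 * p) * (t ^ (1/γ)) ^ ((d:ℝ)/2)) * ∫ y, G 1 y ^ p := by
          rw [← Real.rpow_mul hτ.le]; ring
      _ = (t ^ (1/γ)) ^ (-(d:ℝ)/2 * p + (d:ℝ)/2) * ∫ y, G 1 y ^ p := by
          rw [← Real.rpow_add hτ]
      _ = (∫ x, G 1 x ^ p) * t ^ (-((d:ℝ)/(2*γ)) * (p-1)) := by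
          rw [← Real.rpow_mul ht.le, mul_comm]
          congr 2
          field_simp
          ring
  refine ⟨∫ x, G 1 x ^ p, hIpos, ∫ x, G 1 x ^ p, hIpos, fun t ht => ?_⟩
  rw [key t ht]
  exact ⟨le_refl _, le_refl _⟩
end

section
/- Let f_n : [0,T] → [0,∞) satisfy f_0 bounded and f_{n+1}(t) ≤ C ∫_0^t (1 + f_n(s)) g(t-s) ds for all n ≥ 0 and t ∈ [0,T], where g ≥ 0 with ∫_0^T g(s) ds < ∞ and C > 0. Then sup_{n≥0} sup_{t∈[0,T]} f_n(t) < ∞. -/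
open MeasureTheory Filter Real

theorem stmt18 (T C : ℝ) (hT : 0 < T) (hC : 0 < C)
    (g : ℝ → ℝ) (hg_nonneg : ∀ s, 0 ≤ g s) (hg_int : IntegrableOn g (Set.Icc 0 T))
    (f : ℕ → ℝ → ℝ) (hf_meas : ∀ n, Measurable (f n))
    (hf_nonneg : ∀ n, ∀ t ∈ Set.Icc 0 T, 0 ≤ f n t)
    (hf0 : ∃ M : ℝ, ∀ t ∈ Set.Icc 0 T, f 0 t ≤ M)
    (hrec : ∀ n, ∀ t ∈ Set.Icc 0 T,
      f (n + 1) t ≤ C * ∫ s in Set.Ioc 0 t, (1 + f n s) * g (t - s)) :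
    ∃ M : ℝ, ∀ n, ∀ t ∈ Set.Icc 0 T, f n t ≤ M := by
  obtain ⟨M, hM⟩ := hf0
  -- exponential-weighted integrals tend to 0
  have hmeasF : ∀ k : ℕ, AEStronglyMeasurable (fun u => Real.exp (-(k : ℝ) * u) * g u)
      (volume.restrict (Set.Icc 0 T)) := by
    intro k
    exact ((Real.continuous_exp.comp (continuous_const.mul continuous_id)).aestronglyMeasurable).mul
      hg_int.aestronglyMeasurable
  have hlim : Tendsto (fun k : ℕ => ∫ u in Set.Icc 0 T, Real.exp (-(k : ℝ) * u) * g u)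
      atTop (nhds 0) := by
    have h := tendsto_integral_of_dominated_convergence (μ := volume.restrict (Set.Icc 0 T))
      (F := fun (k : ℕ) u => Real.exp (-(k : ℝ) * u) * g u) (f := fun _ => (0:ℝ))
      g (fun k => hmeasF k) hg_int ?_ ?_
    · simpa using h
    · intro k
      filter_upwards [ae_restrict_mem measurableSet_Icc] with u hu
      have h1 : Real.exp (-(k : ℝ) * u) ≤ 1 := by
        apply Real.exp_le_one_iff.2
        have : (0:ℝ) ≤ (k : ℝ) * u := mul_nonneg (Nat.cast_nonneg k) hu.1
        linarith
      have h2 : 0 ≤ Real.exp (-(k : ℝ) * u) * g u :=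
        mul_nonneg (Real.exp_nonneg _) (hg_nonneg u)
      rw [Real.norm_eq_abs, abs_of_nonneg h2]
      calc Real.exp (-(k : ℝ) * u) * g u ≤ 1 * g u :=
            mul_le_mul_of_nonneg_right h1 (hg_nonneg u)
        _ = g u := one_mul _
    · have hne : ∀ᵐ u ∂(volume.restrict (Set.Icc 0 T)), u ≠ 0 := by
        apply ae_restrict_of_ae
        rw [ae_iff]
        have : {u : ℝ | ¬ u ≠ 0} = {0} := by ext u; simp
        rw [this]
        exact Real.volume_singleton
      filter_upwards [ae_restrict_mem measurableSet_Icc, hne] with u hu hu0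
      have hupos : 0 < u := lt_of_le_of_ne hu.1 (Ne.symm hu0)
      have h1 : Tendsto (fun k : ℕ => -(k : ℝ) * u) atTop atBot := by
        have h := (tendsto_natCast_atTop_atTop (R := ℝ)).atTop_mul_const hupos
        simp only [neg_mul]
        exact tendsto_neg_atBot_iff.2 h
      have h2 : Tendsto (fun k : ℕ => Real.exp (-(k : ℝ) * u)) atTop (nhds 0) :=
        Real.tendsto_exp_atBot.comp h1
      have := h2.mul_const (g u)
      simpa using this
  obtain ⟨k, hk⟩ : ∃ k : ℕ, ∫ u in Set.Icc 0 T, Real.exp (-(k : ℝ) * u) * g u ≤ 1 / (2 * C) := by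
    have hpos : (0 : ℝ) < 1 / (2 * C) := by positivity
    exact (hlim.eventually_le_const hpos).exists
  set lam : ℝ := (k : ℝ) with hlam
  have hlam0 : 0 ≤ lam := Nat.cast_nonneg k
  set B : ℝ := max 2 (1 + M) with hB
  have hB2 : 2 ≤ B := le_max_left _ _
  have hB0 : 0 < B := lt_of_lt_of_le two_pos hB2
  -- integrability of the weighted g on Icc 0 T
  have hwg_int : IntegrableOn (fun u => Real.exp (-lam * u) * g u) (Set.Icc 0 T) := by
    apply Integrable.mono hg_int (hmeasF k)
    filter_upwards [ae_restrict_mem measurableSet_Icc] with u hu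
    have h1 : Real.exp (-lam * u) ≤ 1 := by
      apply Real.exp_le_one_iff.2
      have : (0:ℝ) ≤ lam * u := mul_nonneg hlam0 hu.1
      linarith
    have h2 : 0 ≤ Real.exp (-lam * u) * g u := mul_nonneg (Real.exp_nonneg _) (hg_nonneg u)
    rw [Real.norm_eq_abs, abs_of_nonneg h2, Real.norm_eq_abs, abs_of_nonneg (hg_nonneg u)]
    calc Real.exp (-lam * u) * g u ≤ 1 * g u := mul_le_mul_of_nonneg_right h1 (hg_nonneg u)
      _ = g u := one_mul _
  -- main induction
  have key : ∀ n, ∀ t ∈ Set.Icc 0 T, 1 + f n t ≤ B * Real.exp (lam * t) := by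
    intro n
    induction n with
    | zero =>
      intro t ht
      have h1 : 1 + f 0 t ≤ 1 + M := by linarith [hM t ht]
      have h2 : (1 : ℝ) + M ≤ B := le_max_right _ _
      have h3 : 1 ≤ Real.exp (lam * t) := Real.one_le_exp (mul_nonneg hlam0 ht.1)
      nlinarith
    | succ n ih =>
      intro t ht
      have ht0 : 0 ≤ t := ht.1
      have htT : t ≤ T := ht.2
      have hsub : Set.Ioc (0:ℝ) t ⊆ Set.Icc 0 T :=
        Set.Ioc_subset_Icc_self.trans (Set.Icc_subset_Icc_right htT)
      -- integrability of s ↦ g (t - s) on Ioc 0 t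
      have hgI : IntegrableOn g (Set.Ioc 0 t) := hg_int.mono_set hsub
      have hgiv : IntervalIntegrable g volume 0 t :=
        (intervalIntegrable_iff_integrableOn_Ioc_of_le ht0).2 hgI
      have hgt' : IntervalIntegrable (fun s => g (t - s)) volume 0 t := by
        have := hgiv.comp_sub_left t
        simpa using this.symm
      have hgt : IntegrableOn (fun s => g (t - s)) (Set.Ioc 0 t) :=
        (intervalIntegrable_iff_integrableOn_Ioc_of_le ht0).1 hgt'
      -- integrability of the dominating function
      have hbound : IntegrableOn (fun s => B * Real.exp (lam * s) * g (t - s)) (Set.Ioc 0 t) := by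
        apply Integrable.mono (hgt.const_mul (B * Real.exp (lam * t)))
        · exact ((continuous_const.mul (Real.continuous_exp.comp
            (continuous_const.mul continuous_id))).aestronglyMeasurable).mul
            hgt.aestronglyMeasurable
        · filter_upwards [ae_restrict_mem measurableSet_Ioc] with s hs
          have h1 : Real.exp (lam * s) ≤ Real.exp (lam * t) :=
            Real.exp_le_exp.2 (mul_le_mul_of_nonneg_left hs.2 hlam0)
          have h2 : 0 ≤ B * Real.exp (lam * s) * g (t - s) :=
            mul_nonneg (mul_nonneg hB0.le (Real.exp_nonneg _)) (hg_nonneg _)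
          have h3 : 0 ≤ B * Real.exp (lam * t) * g (t - s) :=
            mul_nonneg (mul_nonneg hB0.le (Real.exp_nonneg _)) (hg_nonneg _)
          rw [Real.norm_eq_abs, abs_of_nonneg h2, Real.norm_eq_abs, abs_of_nonneg h3]
          exact mul_le_mul_of_nonneg_right
            (mul_le_mul_of_nonneg_left h1 hB0.le) (hg_nonneg _)
      -- step 1: monotone comparison
      have h1 : ∫ s in Set.Ioc 0 t, (1 + f n s) * g (t - s)
          ≤ ∫ s in Set.Ioc 0 t, B * Real.exp (lam * s) * g (t - s) := by
        apply integral_mono_of_nonneg _ hbound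
        · filter_upwards [ae_restrict_mem measurableSet_Ioc] with s hs
          have hsI : s ∈ Set.Icc 0 T := hsub hs
          exact mul_le_mul_of_nonneg_right (ih s hsI) (hg_nonneg _)
        · filter_upwards [ae_restrict_mem measurableSet_Ioc] with s hs
          have hsI : s ∈ Set.Icc 0 T := hsub hs
          have : 0 ≤ 1 + f n s := by linarith [hf_nonneg n s hsI]
          exact mul_nonneg this (hg_nonneg _)
      -- step 2: substitution
      have h2 : ∫ s in Set.Ioc 0 t, B * Real.exp (lam * s) * g (t - s)
          = B * Real.exp (lam * t) * ∫ u in Set.Ioc 0 t, Real.exp (-lam * u) * g u := by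
        have e1 : ∀ s : ℝ, B * Real.exp (lam * s) * g (t - s)
            = B * Real.exp (lam * t) * (Real.exp (-lam * (t - s)) * g (t - s)) := by
          intro s
          have h : Real.exp (lam * t) * Real.exp (-lam * (t - s)) = Real.exp (lam * s) := by
            rw [← Real.exp_add]
            ring_nf
          rw [← h]
          ring
        simp_rw [e1]
        rw [integral_const_mul]
        congr 1
        rw [← intervalIntegral.integral_of_le ht0, ← intervalIntegral.integral_of_le ht0]
        have := intervalIntegral.integral_comp_sub_left
          (fun u => Real.exp (-lam * u) * g u) t (a := 0) (b := t)
        simpa using this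
      -- step 3: bound the weighted integral
      have h3 : ∫ u in Set.Ioc 0 t, Real.exp (-lam * u) * g u ≤ 1 / (2 * C) := by
        have hsub' : ∫ u in Set.Ioc 0 t, Real.exp (-lam * u) * g u
            ≤ ∫ u in Set.Icc 0 T, Real.exp (-lam * u) * g u := by
          apply setIntegral_mono_set hwg_int
          · filter_upwards [ae_restrict_mem measurableSet_Icc] with u _
            exact mul_nonneg (Real.exp_nonneg _) (hg_nonneg u)
          · exact HasSubset.Subset.eventuallyLE hsub
        exact hsub'.trans hk
      -- combine
      have hrect := hrec n t ht
      have hint_nonneg : 0 ≤ Real.exp (lam * t) := Real.exp_nonneg _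
      have hfin : f (n + 1) t ≤ C * (B * Real.exp (lam * t) * (1 / (2 * C))) := by
        calc f (n + 1) t ≤ C * ∫ s in Set.Ioc 0 t, (1 + f n s) * g (t - s) := hrect
          _ ≤ C * ∫ s in Set.Ioc 0 t, B * Real.exp (lam * s) * g (t - s) :=
              mul_le_mul_of_nonneg_left h1 hC.le
          _ = C * (B * Real.exp (lam * t) * ∫ u in Set.Ioc 0 t, Real.exp (-lam * u) * g u) := by
              rw [h2]
          _ ≤ C * (B * Real.exp (lam * t) * (1 / (2 * C))) := by
              apply mul_le_mul_of_nonneg_left _ hC.le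
              exact mul_le_mul_of_nonneg_left h3 (by positivity)
      have heq : C * (B * Real.exp (lam * t) * (1 / (2 * C))) = B * Real.exp (lam * t) / 2 := by
        field_simp
      have he1 : 1 ≤ Real.exp (lam * t) := Real.one_le_exp (mul_nonneg hlam0 ht0)
      rw [heq] at hfin
      nlinarith
  refine ⟨B * Real.exp (lam * T), fun n t ht => ?_⟩
  have hk1 := key n t ht
  have hmono : Real.exp (lam * t) ≤ Real.exp (lam * T) :=
    Real.exp_le_exp.2 (mul_le_mul_of_nonneg_left ht.2 hlam0)
  nlinarith
end

section
/- Let H : [0,∞) → [0,∞) be measurable and locally bounded with H(t) ≤ C ∫_0^t H(s) g(t-s) ds for all t > 0, where g ≥ 0 is locally integrable and C > 0. Then H(t) = 0 for all t > 0. -/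
open MeasureTheory Set Filter

private lemma key_step (C : ℝ) (hC : 0 < C)
    (g : ℝ → ℝ) (hg_nonneg : ∀ s, 0 ≤ g s)
    (hg_int : ∀ T : ℝ, 0 < T → IntegrableOn g (Set.Icc 0 T))
    (H : ℝ → ℝ) (hH_nonneg : ∀ t, 0 ≤ H t)
    (hrec : ∀ t : ℝ, 0 < t → H t ≤ C * ∫ s in Set.Ioc 0 t, H s * g (t - s))
    (δ : ℝ) (hδ : 0 < δ) (hsmall : C * ∫ s in Set.Ioc 0 δ, g s ≤ 1/2)
    (a : ℝ) (ha : 0 ≤ a) (hzero : ∀ s ∈ Set.Ioc 0 a, H s = 0)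
    (K : ℝ) (hK : 0 ≤ K) (hbd : ∀ s ∈ Set.Ioc a (a+δ), H s ≤ K) :
    ∀ t ∈ Set.Ioc a (a+δ), H t ≤ K / 2 := by
  intro t ht
  have hat : a < t := ht.1
  have htδ : t ≤ a + δ := ht.2
  have ht0 : 0 < t := lt_of_le_of_lt ha hat
  -- integrability of s ↦ g (t - s) on Ioc 0 t
  have hgint_t : IntervalIntegrable g volume 0 t := by
    rw [intervalIntegrable_iff_integrableOn_Ioc_of_le ht0.le]
    exact (hg_int t ht0).mono_set Ioc_subset_Icc_self
  have hgt : IntervalIntegrable (fun s => g (t - s)) volume 0 t := by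
    have := hgint_t.comp_sub_left t
    simp only [sub_zero, sub_self] at this
    exact this.symm
  have hgtOn : IntegrableOn (fun s => g (t - s)) (Set.Ioc 0 t) := by
    rw [intervalIntegrable_iff_integrableOn_Ioc_of_le ht0.le] at hgt
    exact hgt
  set φ : ℝ → ℝ := (Set.Ioc a t).indicator (fun s => K * g (t - s)) with hφ
  have hφint : Integrable φ (volume.restrict (Set.Ioc 0 t)) :=
    (hgtOn.const_mul K).indicator measurableSet_Ioc
  have hle : (fun s => H s * g (t - s)) ≤ᵐ[volume.restrict (Set.Ioc 0 t)] φ := by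
    filter_upwards [ae_restrict_mem measurableSet_Ioc] with s hs
    by_cases hsa : s ≤ a
    · have : H s = 0 := hzero s ⟨hs.1, hsa⟩
      rw [this, zero_mul]
      exact Set.indicator_nonneg (fun x _ => mul_nonneg hK (hg_nonneg _)) s
    · push_neg at hsa
      have hmem : s ∈ Set.Ioc a t := ⟨hsa, hs.2⟩
      rw [hφ, Set.indicator_of_mem hmem]
      exact mul_le_mul_of_nonneg_right
        (hbd s ⟨hsa, hs.2.trans htδ⟩) (hg_nonneg _)
  have hI : (∫ s in Set.Ioc 0 t, H s * g (t - s)) ≤ ∫ s in Set.Ioc 0 t, φ s :=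
    integral_mono_of_nonneg
      (Eventually.of_forall fun s => mul_nonneg (hH_nonneg s) (hg_nonneg _)) hφint hle
  have hφeq : (∫ s in Set.Ioc 0 t, φ s) = K * ∫ s in Set.Ioc a t, g (t - s) := by
    rw [hφ, setIntegral_indicator measurableSet_Ioc,
      Set.inter_eq_self_of_subset_right (Set.Ioc_subset_Ioc_left ha),
      integral_const_mul]
  have hcov : (∫ s in Set.Ioc a t, g (t - s)) = ∫ s in Set.Ioc 0 (t - a), g s := by
    rw [← intervalIntegral.integral_of_le hat.le,
      intervalIntegral.integral_comp_sub_left g t, sub_self,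
      intervalIntegral.integral_of_le (by linarith)]
  have hmono : (∫ s in Set.Ioc 0 (t - a), g s) ≤ ∫ s in Set.Ioc 0 δ, g s := by
    apply setIntegral_mono_set ((hg_int δ hδ).mono_set Ioc_subset_Icc_self)
      (Eventually.of_forall fun s => hg_nonneg s)
    exact HasSubset.Subset.eventuallyLE (Set.Ioc_subset_Ioc_right (by linarith))
  calc H t ≤ C * ∫ s in Set.Ioc 0 t, H s * g (t - s) := hrec t ht0
    _ ≤ C * (K * ∫ s in Set.Ioc 0 δ, g s) := by
        apply mul_le_mul_of_nonneg_left _ hC.le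
        calc (∫ s in Set.Ioc 0 t, H s * g (t - s)) ≤ ∫ s in Set.Ioc 0 t, φ s := hI
          _ = K * ∫ s in Set.Ioc a t, g (t - s) := hφeq
          _ = K * ∫ s in Set.Ioc 0 (t - a), g s := by rw [hcov]
          _ ≤ K * ∫ s in Set.Ioc 0 δ, g s := mul_le_mul_of_nonneg_left hmono hK
    _ = K * (C * ∫ s in Set.Ioc 0 δ, g s) := by ring
    _ ≤ K * (1/2) := mul_le_mul_of_nonneg_left hsmall hK
    _ = K / 2 := by ring

private lemma step_zero (C : ℝ) (hC : 0 < C)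
    (g : ℝ → ℝ) (hg_nonneg : ∀ s, 0 ≤ g s)
    (hg_int : ∀ T : ℝ, 0 < T → IntegrableOn g (Set.Icc 0 T))
    (H : ℝ → ℝ) (hH_nonneg : ∀ t, 0 ≤ H t)
    (hH_bdd : ∀ T : ℝ, 0 < T → ∃ M : ℝ, ∀ t ∈ Set.Icc 0 T, H t ≤ M)
    (hrec : ∀ t : ℝ, 0 < t → H t ≤ C * ∫ s in Set.Ioc 0 t, H s * g (t - s))
    (δ : ℝ) (hδ : 0 < δ) (hsmall : C * ∫ s in Set.Ioc 0 δ, g s ≤ 1/2)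
    (a : ℝ) (ha : 0 ≤ a) (hzero : ∀ s ∈ Set.Ioc 0 a, H s = 0) :
    ∀ t ∈ Set.Ioc a (a+δ), H t = 0 := by
  obtain ⟨M, hM⟩ := hH_bdd (a + δ) (by linarith)
  set K₀ : ℝ := max M 0 with hK₀
  have hKnn : 0 ≤ K₀ := le_max_right _ _
  have key : ∀ n : ℕ, ∀ t ∈ Set.Ioc a (a+δ), H t ≤ K₀ / 2 ^ n := by
    intro n
    induction n with
    | zero =>
      intro t ht
      have h1 : H t ≤ K₀ := le_trans (hM t ⟨by linarith [ht.1], ht.2⟩) (le_max_left M 0)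
      simpa using h1
    | succ n ih =>
      have := key_step C hC g hg_nonneg hg_int H hH_nonneg hrec δ hδ hsmall a ha hzero
        (K₀ / 2 ^ n) (by positivity) ih
      intro t ht
      have := this t ht
      calc H t ≤ K₀ / 2 ^ n / 2 := this
        _ = K₀ / 2 ^ (n + 1) := by rw [div_div, ← pow_succ]
  intro t ht
  refine le_antisymm ?_ (hH_nonneg t)
  have htend : Tendsto (fun n : ℕ => K₀ / 2 ^ n) atTop (nhds 0) := by
    simp_rw [div_eq_mul_inv, ← inv_pow]
    have h2 : |(2:ℝ)⁻¹| < 1 := by rw [abs_of_pos]; norm_num; norm_num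
    simpa using (tendsto_pow_atTop_nhds_zero_of_abs_lt_one h2).const_mul K₀
  exact ge_of_tendsto' htend fun n => key n t ht

theorem stmt19 (C : ℝ) (hC : 0 < C)
    (g : ℝ → ℝ) (hg_nonneg : ∀ s, 0 ≤ g s)
    (hg_int : ∀ T : ℝ, 0 < T → IntegrableOn g (Set.Icc 0 T))
    (H : ℝ → ℝ) (hH_meas : Measurable H) (hH_nonneg : ∀ t, 0 ≤ H t)
    (hH_bdd : ∀ T : ℝ, 0 < T → ∃ M : ℝ, ∀ t ∈ Set.Icc 0 T, H t ≤ M)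
    (hrec : ∀ t : ℝ, 0 < t → H t ≤ C * ∫ s in Set.Ioc 0 t, H s * g (t - s)) :
    ∀ t : ℝ, 0 < t → H t = 0 := by
  -- find δ > 0 with C * ∫_{(0,δ]} g ≤ 1/2
  have hcont : ContinuousOn (fun x => ∫ s in Set.Ioc 0 x, g s) (Set.Icc 0 1) :=
    intervalIntegral.continuousOn_primitive (hg_int 1 one_pos)
  have h0 : (∫ s in Set.Ioc (0:ℝ) 0, g s) = 0 := by simp
  have htend : Tendsto (fun x => ∫ s in Set.Ioc 0 x, g s) (nhdsWithin 0 (Set.Ioc 0 1))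
      (nhds 0) := by
    have := (hcont 0 (by norm_num)).tendsto
    rw [h0] at this
    exact this.mono_left (nhdsWithin_mono 0 Ioc_subset_Icc_self)
  have hev : ∀ᶠ x in nhdsWithin 0 (Set.Ioc 0 1),
      (∫ s in Set.Ioc 0 x, g s) < 1 / (2 * C) := by
    apply htend.eventually_lt_const
    positivity
  have : ∃ δ, δ ∈ Set.Ioc (0:ℝ) 1 ∧ (∫ s in Set.Ioc 0 δ, g s) < 1 / (2 * C) := by
    have hne : (nhdsWithin (0:ℝ) (Set.Ioc 0 1)).NeBot := left_nhdsWithin_Ioc_neBot one_pos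
    obtain ⟨δ, hδ1, hδ2⟩ := (eventually_mem_nhdsWithin.and hev).exists
    exact ⟨δ, hδ1, hδ2⟩
  obtain ⟨δ, hδmem, hδint⟩ := this
  have hδ : 0 < δ := hδmem.1
  have hsmall : C * ∫ s in Set.Ioc 0 δ, g s ≤ 1 / 2 := by
    have := mul_lt_mul_of_pos_left hδint hC
    have heq : C * (1 / (2 * C)) = 1 / 2 := by field_simp
    rw [heq] at this
    exact this.le
  have main : ∀ n : ℕ, ∀ t ∈ Set.Ioc 0 ((n : ℝ) * δ), H t = 0 := by
    intro n
    induction n with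
    | zero => intro t ht; simp at ht
    | succ n ih =>
      intro t ht
      by_cases hle : t ≤ (n : ℝ) * δ
      · exact ih t ⟨ht.1, hle⟩
      · push_neg at hle
        have := step_zero C hC g hg_nonneg hg_int H hH_nonneg hH_bdd hrec δ hδ hsmall
          ((n : ℝ) * δ) (by positivity) ih
        apply this t
        refine ⟨hle, ?_⟩
        have := ht.2
        push_cast at this ⊢
        linarith
  intro t ht
  obtain ⟨n, hn⟩ := exists_nat_ge (t / δ)
  exact main n t ⟨ht, by rwa [div_le_iff₀ hδ] at hn⟩
end
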